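/- For the method-of-moments SRRS scheme, the worst-case conditional expected delay is attained at changepoint ν = 1: for every A > 0, θ > 0 and every j ≥ 1 with P_{θ,ν=j}(N_A ≥ j) > 0, one has E_{θ,ν=1}(N_A) ≥ E_{θ,ν=j}(N_A − j + 1 | N_A ≥ j). In particular, on the event {N_A ≥ j} the stopping time N_A^{(j)} := inf{n ≥ j : Σ_{k=j}^{n} Λ_{n,k} ≥ A} satisfies N_A^{(j)} ≥ N_A pointwise. -/

import Mathlib

open MeasureTheory ProbabilityTheory Filter
open scoped ENNReal NNReal

noncomputable section

def gam (θ x : ℝ) : ℝ := gammaPDFReal θ 1 x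

/-!
Since every `Λ_{n,k}` is nonnegative, `R_n ≥ Σ_{k=j}^n Λ_{n,k}`, so `N_A ≤ N_A^{(j)}`; and
`N_A^{(j)} = j - 1 + T`, where `T` is the SRRS stopping time run on `X_j, X_{j+1}, …`.
The event `{N_A ≥ j}` is determined by `X_1, …, X_{j-1}` and `T` by `X_j, X_{j+1}, …`, so they
are independent under `P_j`, and `E_j T = E_1 N_A` because `X_j, X_{j+1}, …` under `P_j` and
`X_1, X_2, …` under `P_1` are both i.i.d. `Gamma(θ,1)`. Hence
`E_j[(N_A - j + 1) 1{N_A ≥ j}] ≤ E_j[T 1{N_A ≥ j}] = E_1 N_A · P_j(N_A ≥ j)`.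
-/

theorem Real.measurable_Gamma : Measurable Real.Gamma :=
  measurable_of_tendsto_metrizable (fun n => by unfold Real.GammaSeq; fun_prop)
    (tendsto_pi_nhds.2 Real.GammaSeq_tendsto_Gamma)

theorem measurable_gam : Measurable (Function.uncurry gam) := by
  unfold Function.uncurry gam gammaPDFReal
  refine Measurable.ite (measurableSet_le measurable_const measurable_snd) ?_ measurable_const
  have := Real.measurable_Gamma
  fun_prop

theorem gam_nonneg {a : ℝ} (ha : 0 ≤ a) (x : ℝ) : 0 ≤ gam a x := by
  unfold gam gammaPDFReal
  split_ifs with hx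
  · have := Real.Gamma_nonneg_of_nonneg ha
    positivity
  · exact le_rfl

theorem gam_of_neg (a : ℝ) {x : ℝ} (hx : x < 0) : gam a x = 0 := by
  simp [gam, gammaPDFReal, hx]

theorem ENNReal.sub_add_one_le_of_le_add {a b : ℝ≥0∞} {d : ℕ}
    (hda : ((d + 1 : ℕ) : ℝ≥0∞) ≤ a) (hab : a ≤ b + d) : a - (d + 1 : ℕ) + 1 ≤ b := by
  push_cast at hda ⊢
  rw [← tsub_tsub, tsub_add_cancel_of_le (ENNReal.le_sub_of_add_le_left (by simp) hda)]
  exact tsub_le_iff_right.2 hab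

def firstPassage (r : ℕ → ℝ) (A : ℝ) (j : ℕ) : ℝ≥0∞ :=
  ⨅ n ∈ {n : ℕ | j ≤ n ∧ A ≤ r n}, (n : ℝ≥0∞)

section FirstPassage

variable {r r' : ℕ → ℝ} {A : ℝ}

theorem firstPassage_mono {i j : ℕ} (hij : i ≤ j) (hr : ∀ n, j ≤ n → r' n ≤ r n) :
    firstPassage r A i ≤ firstPassage r' A j :=
  le_iInf₂ fun n hn => iInf₂_le n ⟨hij.trans hn.1, hn.2.trans (hr n hn.1)⟩

theorem firstPassage_congr {j : ℕ} (h : ∀ n, j ≤ n → r n = r' n) :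
    firstPassage r A j = firstPassage r' A j := by
  have hset : {n | j ≤ n ∧ A ≤ r n} = {n | j ≤ n ∧ A ≤ r' n} :=
    Set.ext fun n => and_congr_right fun hn => by rw [h n hn]
  rw [firstPassage, hset, firstPassage]

theorem firstPassage_add (r : ℕ → ℝ) (A : ℝ) (j d : ℕ) :
    firstPassage r A (j + d) = firstPassage (fun n => r (n + d)) A j + d := by
  have himage : {n : ℕ | j + d ≤ n ∧ A ≤ r n} = (· + d) '' {n | j ≤ n ∧ A ≤ r (n + d)} := by
    ext n
    constructor
    · rintro ⟨hn, hA⟩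
      exact ⟨n - d, ⟨by omega, by rwa [Nat.sub_add_cancel (by omega)]⟩, by dsimp only; omega⟩
    · rintro ⟨m, ⟨hm, hA⟩, rfl⟩
      exact ⟨by dsimp only; omega, hA⟩
  simp only [firstPassage, himage, iInf_image, ENNReal.iInf_add, Nat.cast_add]

theorem le_firstPassage_iff {n j : ℕ} :
    (n : ℝ≥0∞) ≤ firstPassage r A j ↔ ∀ m, j ≤ m → m < n → r m < A := by
  refine ⟨fun h m hjm hmn => ?_, fun h => le_iInf₂ fun m ⟨hjm, hA⟩ =>
    Nat.cast_le.2 (not_lt.1 fun hmn => (h m hjm hmn).not_ge hA)⟩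
  by_contra! hA
  exact (h.trans (iInf₂_le m ⟨hjm, hA⟩)).not_gt (Nat.cast_lt.2 hmn)

theorem measurable_firstPassage {α : Type*} [MeasurableSpace α] {r : α → ℕ → ℝ}
    (hr : ∀ n, Measurable fun a => r a n) (A : ℝ) (j : ℕ) :
    Measurable fun a => firstPassage (r a) A j := by
  simp only [firstPassage, Set.mem_ofPred_eq, iInf_eq_if]
  exact .iInf fun n => .ite ((MeasurableSet.const _).inter
    (measurableSet_le measurable_const (hr n))) measurable_const measurable_const

end FirstPassage

theorem DependsOn.measurable_comp {Ω κ E β : Type*} {mΩ : MeasurableSpace Ω}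
    [MeasurableSpace E] [MeasurableSpace β] [Nonempty E] {X : κ → Ω → E} {F : (κ → E) → β}
    {I : Set κ} (hF : Measurable F) (hFI : DependsOn F I) (hX : ∀ l ∈ I, Measurable (X l)) :
    Measurable fun ω => F fun l => X l ω := by
  classical
  have hrestrict : (fun ω => F fun l => X l ω) =
      fun ω => F fun l => if l ∈ I then X l ω else Classical.arbitrary E := by
    funext ω
    exact hFI fun l hl => by simp [hl]
  rw [hrestrict]
  refine hF.comp (measurable_pi_lambda _ fun l => ?_)
  split_ifs with hl
  · exact hX l hl
  · exact measurable_const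

theorem measurable_iSup₂_comap {Ω ι E : Type*} {mE : MeasurableSpace E} {X : ι → Ω → E}
    {T : Set ι} {i : ι} (hi : i ∈ T) : Measurable[⨆ i ∈ T, mE.comap (X i)] (X i) :=
  (comap_measurable (X i)).mono (le_iSup₂ (f := fun i (_ : i ∈ T) => mE.comap (X i)) i hi) le_rfl

namespace ProbabilityTheory

variable {Ω E : Type*} {mΩ : MeasurableSpace Ω} {mE : MeasurableSpace E} {μ : Measure Ω}
  {X : ℕ → Ω → E}

theorem iIndepFun.map_comp_add_eq_infinitePi (hX : ∀ i, Measurable (X i)) (hind : iIndepFun X μ)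
    {γ : Measure E} [IsProbabilityMeasure γ] {j : ℕ} (hlaw : ∀ i, j ≤ i → μ.map (X i) = γ) :
    μ.map (fun ω i => X (i + j) ω) = Measure.infinitePi fun _ => γ := by
  rw [(hind.precomp (add_left_injective j)).map_fun_eq_infinitePi_map fun i => hX (i + j)]
  congr with i : 1
  exact hlaw (i + j) (Nat.le_add_left j i)

theorem iIndepFun.lintegral_comp_add (hX : ∀ i, Measurable (X i)) (hind : iIndepFun X μ)
    {γ : Measure E} [IsProbabilityMeasure γ] {d : ℕ} (hlaw : ∀ i, d < i → μ.map (X i) = γ)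
    {F : (ℕ → E) → ℝ≥0∞} (hF : Measurable F) (hF1 : DependsOn F (Set.Ici 1)) :
    ∫⁻ ω, F (fun i => X (i + d) ω) ∂μ =
      ∫⁻ x, F (fun l => x (l - 1)) ∂(Measure.infinitePi fun _ => γ) := by
  have hreindex : ∀ ω, F (fun i => X (i + d) ω) = F fun l => X (l - 1 + (d + 1)) ω :=
    fun ω => hF1 fun l hl => by
      have := Set.mem_Ici.1 hl
      congr 1
      omega
  calc ∫⁻ ω, F (fun i => X (i + d) ω) ∂μ
      = ∫⁻ ω, F (fun l => X (l - 1 + (d + 1)) ω) ∂μ := lintegral_congr hreindex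
    _ = ∫⁻ x, F (fun l => x (l - 1)) ∂(μ.map fun ω i => X (i + (d + 1)) ω) :=
        (lintegral_map (hF.comp (measurable_pi_lambda _ fun l => measurable_pi_apply (l - 1)))
          (measurable_pi_lambda _ fun i => hX (i + (d + 1)))).symm
    _ = _ := by rw [hind.map_comp_add_eq_infinitePi hX hlaw]

theorem iIndepFun.setLIntegral_comp_add_eq_measure_mul [Nonempty E]
    (hX : ∀ i, Measurable (X i)) (hind : iIndepFun X μ) {d : ℕ} {D : Set (ℕ → E)}
    (hD : MeasurableSet D) (hDd : DependsOn (· ∈ D) (Set.Iic d)) {F : (ℕ → E) → ℝ≥0∞}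
    (hF : Measurable F) (hF1 : DependsOn F (Set.Ici 1)) :
    ∫⁻ ω in {ω | (fun i => X i ω) ∈ D}, F (fun i => X (i + d) ω) ∂μ =
      μ {ω | (fun i => X i ω) ∈ D} * ∫⁻ ω, F (fun i => X (i + d) ω) ∂μ := by
  set S := {ω | (fun i => X i ω) ∈ D}
  have hle : ∀ T : Set ℕ, ⨆ i ∈ T, mE.comap (X i) ≤ mΩ :=
    fun T => iSup₂_le fun i _ => (hX i).comap_le
  have hindep : Indep (⨆ i ∈ Set.Iic d, mE.comap (X i)) (⨆ i ∈ Set.Ioi d, mE.comap (X i)) μ :=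
    indep_iSup_of_disjoint (m := fun i => mE.comap (X i)) (fun i => (hX i).comap_le)
      ((iIndepFun_iff_iIndep _ _ _).1 hind) (Set.Iic_disjoint_Ioi le_rfl)
  have hpast : MeasurableSet[⨆ i ∈ Set.Iic d, mE.comap (X i)] S :=
    (@measurableSet_setOfPred _ (⨆ i ∈ Set.Iic d, mE.comap (X i)) _).2 <|
      DependsOn.measurable_comp (measurable_mem.2 hD) hDd fun i hi => measurable_iSup₂_comap hi
  have hfuture : Measurable[⨆ i ∈ Set.Ioi d, mE.comap (X i)] fun ω => F fun i => X (i + d) ω :=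
    DependsOn.measurable_comp hF hF1 fun i hi =>
      measurable_iSup₂_comap (Nat.lt_add_of_pos_left (Set.mem_Ici.1 hi))
  have hS : MeasurableSet S := hle _ _ hpast
  rw [← lintegral_indicator_one hS, ← lintegral_indicator hS,
    ← lintegral_mul_eq_lintegral_mul_lintegral_of_independent_measurableSpace (hle _) (hle _)
      hindep (Measurable.indicator (f := 1) measurable_const hpast) hfuture]
  refine lintegral_congr fun ω => ?_
  by_cases h : ω ∈ S
  · rw [Set.indicator_of_mem h, Set.indicator_of_mem h, Pi.one_apply, one_mul]
  · rw [Set.indicator_of_notMem h, Set.indicator_of_notMem h, zero_mul]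

end ProbabilityTheory

namespace SRRS

/-! The observations form a sequence `x` with `x i = X_i` (`x 0` is never read).
`momentEstimate θ₀ s t x k n` is `θ_{n,k}`, `likelihoodRatio θ₀ s t x k n` is `Λ_{n,k}` and
`statistic θ₀ s t x j n` is `Σ_{k=j}^n Λ_{n,k}`, so that `R_n` is `statistic θ₀ s t x 1 n`. -/

def momentEstimate (θ₀ s t : ℝ) (x : ℕ → ℝ) (k n : ℕ) : ℝ :=
  if n = k then (if s = 0 ∨ t = 0 then θ₀ else s / t)
  else ((∑ i ∈ Finset.Ico k n, x i) + s) / (((n : ℝ) - k) + t)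

def likelihoodRatio (θ₀ s t : ℝ) (x : ℕ → ℝ) (k n : ℕ) : ℝ :=
  ∏ i ∈ Finset.Icc k n, gam (momentEstimate θ₀ s t x k i) (x i) / gam θ₀ (x i)

def statistic (θ₀ s t : ℝ) (x : ℕ → ℝ) (j n : ℕ) : ℝ :=
  ∑ k ∈ Finset.Icc j n, likelihoodRatio θ₀ s t x k n

def stoppingTime (θ₀ s t A : ℝ) (x : ℕ → ℝ) : ℝ≥0∞ :=
  firstPassage (statistic θ₀ s t x 1) A 1

variable {θ₀ s t A : ℝ}

theorem momentEstimate_shift (x : ℕ → ℝ) (d k n : ℕ) :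
    momentEstimate θ₀ s t (fun i => x (i + d)) k n =
      momentEstimate θ₀ s t x (k + d) (n + d) := by
  simp only [momentEstimate, Nat.add_right_cancel_iff, Finset.sum_Ico_add', Nat.cast_add,
    add_sub_add_right_eq_sub]

theorem likelihoodRatio_shift (x : ℕ → ℝ) (d k n : ℕ) :
    likelihoodRatio θ₀ s t (fun i => x (i + d)) k n =
      likelihoodRatio θ₀ s t x (k + d) (n + d) := by
  rw [likelihoodRatio, likelihoodRatio, ← Finset.map_add_right_Icc, Finset.prod_map]
  simp only [addRightEmbedding_apply, momentEstimate_shift]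

theorem statistic_shift (x : ℕ → ℝ) (d j n : ℕ) :
    statistic θ₀ s t (fun i => x (i + d)) j n = statistic θ₀ s t x (j + d) (n + d) := by
  rw [statistic, statistic, ← Finset.map_add_right_Icc, Finset.sum_map]
  simp only [addRightEmbedding_apply, likelihoodRatio_shift]

theorem firstPassage_statistic_add_one (x : ℕ → ℝ) (d : ℕ) :
    firstPassage (statistic θ₀ s t x (d + 1)) A (d + 1) =
      stoppingTime θ₀ s t A (fun i => x (i + d)) + d := by
  rw [add_comm d 1, firstPassage_add, stoppingTime]
  congr 2 with n
  exact (statistic_shift x d 1 n).symm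

theorem likelihoodRatio_nonneg (hθ₀ : 0 ≤ θ₀) (hs : 0 ≤ s) (ht : 0 ≤ t) (x : ℕ → ℝ)
    (k n : ℕ) : 0 ≤ likelihoodRatio θ₀ s t x k n := by
  by_cases hx : ∀ i ∈ Finset.Icc k n, 0 ≤ x i
  · refine Finset.prod_nonneg fun i hi => div_nonneg (gam_nonneg ?_ _) (gam_nonneg hθ₀ _)
    rw [momentEstimate]
    split_ifs with hik hst
    · exact hθ₀
    · exact div_nonneg hs ht
    · have hki : (k : ℝ) ≤ i := Nat.cast_le.2 (Finset.mem_Icc.1 hi).1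
      refine div_nonneg (add_nonneg (Finset.sum_nonneg fun l hl => hx l ?_) hs) (by linarith)
      grind
  · -- a negative observation contributes the factor `0 / 0 = 0`
    push Not at hx
    obtain ⟨i, hi, hxi⟩ := hx
    rw [likelihoodRatio, Finset.prod_eq_zero hi (by rw [gam_of_neg _ hxi, zero_div])]

theorem statistic_anti (hθ₀ : 0 ≤ θ₀) (hs : 0 ≤ s) (ht : 0 ≤ t) (x : ℕ → ℝ) {i j : ℕ}
    (hij : i ≤ j) (n : ℕ) : statistic θ₀ s t x j n ≤ statistic θ₀ s t x i n :=
  Finset.sum_le_sum_of_subset_of_nonneg (Finset.Icc_subset_Icc_left hij)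
    fun k _ _ => likelihoodRatio_nonneg hθ₀ hs ht x k n

theorem stoppingTime_le_firstPassage_statistic (hθ₀ : 0 ≤ θ₀) (hs : 0 ≤ s) (ht : 0 ≤ t)
    (x : ℕ → ℝ) {j : ℕ} (hj : 1 ≤ j) :
    stoppingTime θ₀ s t A x ≤ firstPassage (statistic θ₀ s t x j) A j :=
  firstPassage_mono hj fun n _ => statistic_anti hθ₀ hs ht x hj n

theorem stoppingTime_le_add (hθ₀ : 0 ≤ θ₀) (hs : 0 ≤ s) (ht : 0 ≤ t) (x : ℕ → ℝ) (d : ℕ) :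
    stoppingTime θ₀ s t A x ≤ stoppingTime θ₀ s t A (fun i => x (i + d)) + d :=
  (stoppingTime_le_firstPassage_statistic hθ₀ hs ht x (Nat.le_add_left 1 d)).trans_eq
    (firstPassage_statistic_add_one x d)

theorem dependsOn_momentEstimate (k n : ℕ) :
    DependsOn (momentEstimate θ₀ s t · k n) (Set.Ico k n) := by
  intro x y h
  simp only [momentEstimate]
  rw [Finset.sum_congr rfl fun i hi => h i (by simpa using hi)]

theorem dependsOn_likelihoodRatio (k n : ℕ) :
    DependsOn (likelihoodRatio θ₀ s t · k n) (Set.Icc k n) := by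
  intro x y h
  refine Finset.prod_congr rfl fun i hi => ?_
  rw [Finset.mem_Icc] at hi
  rw [h i hi, show momentEstimate θ₀ s t x k i = momentEstimate θ₀ s t y k i from
    dependsOn_momentEstimate k i fun l hl => h l ⟨hl.1, by grind⟩]

theorem dependsOn_statistic (j n : ℕ) :
    DependsOn (statistic θ₀ s t · j n) (Set.Icc j n) := fun x y h =>
  Finset.sum_congr rfl fun k hk =>
    dependsOn_likelihoodRatio k n fun i hi => h i ⟨by grind, hi.2⟩

theorem dependsOn_stoppingTime : DependsOn (stoppingTime θ₀ s t A) (Set.Ici 1) :=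
  fun _ _ h => firstPassage_congr fun n _ => dependsOn_statistic 1 n fun i hi => h i hi.1

theorem dependsOn_le_stoppingTime (d : ℕ) :
    DependsOn (fun x => ((d + 1 : ℕ) : ℝ≥0∞) ≤ stoppingTime θ₀ s t A x) (Set.Iic d) := by
  intro x y h
  simp only [stoppingTime, le_firstPassage_iff]
  exact propext <| forall₃_congr fun m _ hmd => iff_of_eq <| congrArg (· < A) <|
    dependsOn_statistic 1 m fun i hi => h i (hi.2.trans (Nat.lt_succ_iff.1 hmd))

theorem measurable_momentEstimate (k n : ℕ) : Measurable (momentEstimate θ₀ s t · k n) := by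
  unfold momentEstimate
  split_ifs <;> fun_prop

theorem measurable_likelihoodRatio (k n : ℕ) : Measurable (likelihoodRatio θ₀ s t · k n) :=
  Finset.measurable_prod _ fun i _ =>
    (measurable_gam.comp ((measurable_momentEstimate k i).prodMk (measurable_pi_apply i))).div
      (measurable_gam.comp (measurable_const.prodMk (measurable_pi_apply i)))

theorem measurable_stoppingTime : Measurable (stoppingTime θ₀ s t A) :=
  measurable_firstPassage
    (fun n => Finset.measurable_sum _ fun k _ => measurable_likelihoodRatio k n) A 1

theorem setLIntegral_stoppingTime_sub_le (hθ₀ : 0 ≤ θ₀) (hs : 0 ≤ s) (ht : 0 ≤ t)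
    {Ω : Type*} {mΩ : MeasurableSpace Ω} {X : ℕ → Ω → ℝ} (hX : ∀ i, Measurable (X i))
    {μ ν : Measure Ω} (hμ : iIndepFun X μ) (hν : iIndepFun X ν) {γ : Measure ℝ}
    [IsProbabilityMeasure γ] (d : ℕ) (hμγ : ∀ i, d < i → μ.map (X i) = γ)
    (hνγ : ∀ i, 0 < i → ν.map (X i) = γ) :
    ∫⁻ ω in {ω | ((d + 1 : ℕ) : ℝ≥0∞) ≤ stoppingTime θ₀ s t A fun i => X i ω},
        (stoppingTime θ₀ s t A (fun i => X i ω) - (d + 1 : ℕ) + 1) ∂μ ≤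
      (∫⁻ ω, stoppingTime θ₀ s t A (fun i => X i ω) ∂ν) *
        μ {ω | ((d + 1 : ℕ) : ℝ≥0∞) ≤ stoppingTime θ₀ s t A fun i => X i ω} := by
  set S := {ω | ((d + 1 : ℕ) : ℝ≥0∞) ≤ stoppingTime θ₀ s t A fun i => X i ω}
  have hT := measurable_stoppingTime (θ₀ := θ₀) (s := s) (t := t) (A := A)
  calc _ ≤ ∫⁻ ω in S, stoppingTime θ₀ s t A (fun i => X (i + d) ω) ∂μ :=
        setLIntegral_mono (hT.comp (measurable_pi_lambda _ fun i => hX (i + d))) fun ω hω =>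
          ENNReal.sub_add_one_le_of_le_add hω (stoppingTime_le_add hθ₀ hs ht _ d)
    _ = μ S * ∫⁻ ω, stoppingTime θ₀ s t A (fun i => X (i + d) ω) ∂μ :=
        hμ.setLIntegral_comp_add_eq_measure_mul hX (measurableSet_le measurable_const hT)
          (dependsOn_le_stoppingTime d) hT dependsOn_stoppingTime
    _ = _ := by
        rw [mul_comm, hμ.lintegral_comp_add hX hμγ hT dependsOn_stoppingTime,
          ← hν.lintegral_comp_add hX (d := 0) hνγ hT dependsOn_stoppingTime]
        simp only [add_zero]

end SRRS

open SRRS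

theorem srrs_worst_delay_at_one_general
    {Ω : Type*} [MeasurableSpace Ω]
    (θ₀ θ : ℝ) (hθ₀ : 0 < θ₀) (hθ : 0 < θ)
    (X : ℕ → Ω → ℝ) (hXmeas : ∀ i, Measurable (X i))
    (P : ℕ → Measure Ω)
    (hindep : ∀ ν, 1 ≤ ν → iIndepFun X (P ν))
    (hlaw : ∀ ν, 1 ≤ ν → ∀ i, 1 ≤ i →
      Measure.map (X i) (P ν) = gammaMeasure (if i < ν then θ₀ else θ) 1)
    (s t : ℝ) (hs : 0 ≤ s) (ht : 0 ≤ t)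
    (θnk : ℕ → ℕ → Ω → ℝ)
    (hθkk : ∀ k ω, θnk k k ω = if s = 0 ∨ t = 0 then θ₀ else s / t)
    (hθnk : ∀ k n ω, k < n →
      θnk k n ω = ((∑ i ∈ Finset.Ico k n, X i ω) + s) / (((n : ℝ) - (k : ℝ)) + t))
    (Λ : ℕ → ℕ → Ω → ℝ)
    (hΛ : ∀ k n ω, Λ k n ω = ∏ i ∈ Finset.Icc k n, gam (θnk k i ω) (X i ω) / gam θ₀ (X i ω))
    (R : ℕ → Ω → ℝ) (hR : ∀ n ω, R n ω = ∑ k ∈ Finset.Icc 1 n, Λ k n ω)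
    (A : ℝ)
    (N : Ω → ℝ≥0∞)
    (hN : ∀ ω, N ω = ⨅ n ∈ {n : ℕ | 1 ≤ n ∧ A ≤ R n ω}, (n : ℝ≥0∞))
    -- N_A^{(j)} = inf{n ≥ j : Σ_{k=j}^{n} Λ_{n,k} ≥ A}
    (Nj : ℕ → Ω → ℝ≥0∞)
    (hNj : ∀ j ω, Nj j ω =
      ⨅ n ∈ {n : ℕ | j ≤ n ∧ A ≤ ∑ k ∈ Finset.Icc j n, Λ k n ω}, (n : ℝ≥0∞)) :
    (∀ j : ℕ, 1 ≤ j → ∀ ω, (j : ℝ≥0∞) ≤ N ω → N ω ≤ Nj j ω) ∧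
      ∀ j : ℕ, 1 ≤ j → (P j) {ω | (j : ℝ≥0∞) ≤ N ω} ≠ 0 →
        (∫⁻ ω in {ω | (j : ℝ≥0∞) ≤ N ω}, (N ω - (j : ℝ≥0∞) + 1) ∂(P j)) /
            ((P j) {ω | (j : ℝ≥0∞) ≤ N ω})
          ≤ ∫⁻ ω, N ω ∂(P 1) := by
  have hΛx : ∀ k n ω, Λ k n ω = likelihoodRatio θ₀ s t (fun i => X i ω) k n := by
    intro k n ω
    refine (hΛ k n ω).trans (Finset.prod_congr rfl fun i hi => ?_)
    rcases (Finset.mem_Icc.1 hi).1.eq_or_lt with rfl | hki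
    · rw [hθkk, momentEstimate, if_pos rfl]
    · rw [hθnk k i ω hki, momentEstimate, if_neg hki.ne']
  have hNx : ∀ ω, N ω = stoppingTime θ₀ s t A (fun i => X i ω) := by
    intro ω
    simp only [hN, hR, hΛx]
    rfl
  have hNjx : ∀ j ω, Nj j ω = firstPassage (statistic θ₀ s t (fun i => X i ω) j) A j := by
    intro j ω
    simp only [hNj, hΛx]
    rfl
  refine ⟨fun j hj ω _ => ?_, fun j hj hS0 => ?_⟩
  · rw [hNx, hNjx]
    exact stoppingTime_le_firstPassage_statistic hθ₀.le hs ht _ hj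
  obtain ⟨d, rfl⟩ := Nat.exists_eq_add_of_le' hj
  have := (hindep _ hj).isProbabilityMeasure
  have := isProbabilityMeasure_gammaMeasure hθ one_pos
  have hlawθ : ∀ ν, 1 ≤ ν → ∀ i, ν ≤ i → (P ν).map (X i) = gammaMeasure θ 1 :=
    fun ν hν i hi => by rw [hlaw ν hν i (hν.trans hi), if_neg hi.not_gt]
  rw [ENNReal.div_le_iff hS0 (measure_ne_top _ _)]
  simp only [hNx]
  exact setLIntegral_stoppingTime_sub_le hθ₀.le hs ht hXmeas (hindep _ hj) (hindep 1 le_rfl) d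
    (hlawθ _ hj) (hlawθ 1 le_rfl)

/-- for the method-of-moments SRRS scheme the worst-case conditional
expected delay is attained at changepoint `ν = 1`: for every `j ≥ 1` with
`P_{θ,ν=j}(N_A ≥ j) > 0`, `E_{θ,ν=1}(N_A) ≥ E_{θ,ν=j}(N_A − j + 1 | N_A ≥ j)`;
moreover, on `{N_A ≥ j}` one has `N_A^{(j)} ≥ N_A` pointwise. -/
theorem srrs_worst_delay_at_one
    {Ω : Type*} [MeasurableSpace Ω]
    (θ₀ θ : ℝ) (hθ₀ : 0 < θ₀) (hθ : 0 < θ)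
    (X : ℕ → Ω → ℝ) (hXmeas : ∀ i, Measurable (X i))
    (P : ℕ → Measure Ω) (hP : ∀ ν, 1 ≤ ν → IsProbabilityMeasure (P ν))
    (hindep : ∀ ν, 1 ≤ ν → iIndepFun X (P ν))
    (hlaw : ∀ ν, 1 ≤ ν → ∀ i, 1 ≤ i →
      Measure.map (X i) (P ν) = gammaMeasure (if i < ν then θ₀ else θ) 1)
    (s t : ℝ) (hs : 0 ≤ s) (ht : 0 ≤ t)
    (θnk : ℕ → ℕ → Ω → ℝ)
    (hθkk : ∀ k ω, θnk k k ω = if s = 0 ∨ t = 0 then θ₀ else s / t)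
    (hθnk : ∀ k n ω, k < n →
      θnk k n ω = ((∑ i ∈ Finset.Ico k n, X i ω) + s) / (((n : ℝ) - (k : ℝ)) + t))
    (Λ : ℕ → ℕ → Ω → ℝ)
    (hΛ : ∀ k n ω, Λ k n ω = ∏ i ∈ Finset.Icc k n, gam (θnk k i ω) (X i ω) / gam θ₀ (X i ω))
    (R : ℕ → Ω → ℝ) (hR : ∀ n ω, R n ω = ∑ k ∈ Finset.Icc 1 n, Λ k n ω)
    (A : ℝ) (hA : 0 < A)
    (N : Ω → ℝ≥0∞)
    (hN : ∀ ω, N ω = ⨅ n ∈ {n : ℕ | 1 ≤ n ∧ A ≤ R n ω}, (n : ℝ≥0∞))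
    -- N_A^{(j)} = inf{n ≥ j : Σ_{k=j}^{n} Λ_{n,k} ≥ A}
    (Nj : ℕ → Ω → ℝ≥0∞)
    (hNj : ∀ j ω, Nj j ω =
      ⨅ n ∈ {n : ℕ | j ≤ n ∧ A ≤ ∑ k ∈ Finset.Icc j n, Λ k n ω}, (n : ℝ≥0∞)) :
    (∀ j : ℕ, 1 ≤ j → ∀ ω, (j : ℝ≥0∞) ≤ N ω → N ω ≤ Nj j ω) ∧
      ∀ j : ℕ, 1 ≤ j → (P j) {ω | (j : ℝ≥0∞) ≤ N ω} ≠ 0 →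
        (∫⁻ ω in {ω | (j : ℝ≥0∞) ≤ N ω}, (N ω - (j : ℝ≥0∞) + 1) ∂(P j)) /
            ((P j) {ω | (j : ℝ≥0∞) ≤ N ω})
          ≤ ∫⁻ ω, N ω ∂(P 1) :=
  srrs_worst_delay_at_one_general θ₀ θ hθ₀ hθ X hXmeas P hindep hlaw s t hs ht θnk hθkk hθnk Λ hΛ R
    hR A N hN Nj hNj
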